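/- Define φ(x) = x² + x and ψ(x) = 3x - 1 on (0,1], ψ(x) = 5 - 3x on (1,2], ψ(x) = x² + x - 7 on (2,∞). Then φ is convex with φ** = φ, the largest convex minorant of ψ is ψ**(x) = -1 on (0,2] and ψ**(x) = x² + x - 7 on (2,∞), and inf_{x>0}(φ(x) - ψ(x)) = 0 ≠ 1 = inf_{x>0}(φ**(x) - ψ**(x)). -/

import Mathlib

/-!
Tangent lines of `φ` are affine minorants touching it, so `φ** = φ`. Since `φ - 7 ≤ ψ` with
equality on `(2,∞)`, the tangent lines of `φ - 7` give `ψ** = ψ` there. On `(0,2]`, an affine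
minorant of `ψ` is at most `-1` at `0⁺` (where `ψ(t) = 3t - 1`) and at `2`, hence on all of
`[0,2]`, and the constant `-1` is itself a minorant. Finally `φ - ψ ≥ 0` vanishes at `1`, while
`φ** - ψ** ≥ 1` only tends to `1` as `x → 0⁺`.
-/

open Filter Set Topology

/-- `φ` admits an affine minorant on `(0,∞)`. -/
def AffBdd (φ : ℝ → ℝ) : Prop := ∃ a b : ℝ, ∀ x > 0, a * x + b ≤ φ x

/-- The biconjugate of `φ` on `(0,∞)`: the pointwise supremum of all affine
minorants of `φ` on `(0,∞)`, i.e. the largest convex minorant of `φ`. -/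
noncomputable def biconj (φ : ℝ → ℝ) (x : ℝ) : ℝ :=
  sSup {y : ℝ | ∃ a b : ℝ, (∀ t > 0, a * t + b ≤ φ t) ∧ y = a * x + b}

noncomputable def phi18 (x : ℝ) : ℝ := x ^ 2 + x

noncomputable def psi18 (x : ℝ) : ℝ :=
  if x ≤ 1 then 3 * x - 1 else if x ≤ 2 then 5 - 3 * x else x ^ 2 + x - 7

theorem biconj_eq {f : ℝ → ℝ} {x v a b : ℝ} (hmin : ∀ t > 0, a * t + b ≤ f t)
    (hv : a * x + b = v)
    (hle : ∀ a' b' : ℝ, (∀ t > 0, a' * t + b' ≤ f t) → a' * x + b' ≤ v) :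
    biconj f x = v :=
  IsGreatest.csSup_eq ⟨⟨a, b, hmin, hv.symm⟩, by rintro y ⟨a', b', h, rfl⟩; exact hle a' b' h⟩

theorem biconj_eq_self_of_supportingLine {f : ℝ → ℝ} {x a b : ℝ} (hx : 0 < x)
    (hmin : ∀ t > 0, a * t + b ≤ f t) (hv : a * x + b = f x) :
    biconj f x = f x :=
  biconj_eq hmin hv fun _ _ h ↦ h x hx

theorem le_of_affine_le_affine_on_Ioo {a b c d ε : ℝ} (hε : 0 < ε)
    (h : ∀ t ∈ Ioo 0 ε, a * t + b ≤ c * t + d) : b ≤ d := by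
  have hlim (p q : ℝ) : Tendsto (fun t ↦ p * t + q) (𝓝[>] 0) (𝓝 q) :=
    ((continuous_const_mul p).add continuous_const).tendsto' 0 q (by simp)
      |>.mono_left nhdsWithin_le_nhds
  exact le_of_tendsto_of_tendsto (hlim a b) (hlim c d)
    (eventually_of_mem (Ioo_mem_nhdsGT hε) h)

theorem affine_le_of_le_of_le {a b m p q x : ℝ} (hp : a * p + b ≤ m) (hq : a * q + b ≤ m)
    (hpx : p ≤ x) (hxq : x ≤ q) : a * x + b ≤ m := by
  rcases le_total 0 a with ha | ha
  · nlinarith [mul_le_mul_of_nonneg_left hxq ha]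
  · nlinarith [mul_le_mul_of_nonpos_left hpx ha]

theorem iInf_coe_eq_of_tendsto {α : Type*} {s : Set α} {f : α → ℝ} {c : ℝ}
    {l : Filter α} [l.NeBot] (hl : ∀ᶠ x in l, x ∈ s) (hle : ∀ x ∈ s, c ≤ f x)
    (ht : Tendsto f l (𝓝 c)) :
    ⨅ x : s, ((f x : ℝ) : EReal) = c := by
  refine le_antisymm ?_ (le_iInf fun x ↦ EReal.coe_le_coe_iff.2 (hle x x.2))
  exact ge_of_tendsto (continuous_coe_real_ereal.tendsto c |>.comp ht)
    (hl.mono fun x hx ↦ iInf_le (fun y : s ↦ ((f y : ℝ) : EReal)) ⟨x, hx⟩)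

theorem psi18_of_le_one {t : ℝ} (h : t ≤ 1) : psi18 t = 3 * t - 1 := if_pos h

theorem psi18_of_one_lt_of_le_two {t : ℝ} (h1 : 1 < t) (h2 : t ≤ 2) : psi18 t = 5 - 3 * t := by
  rw [psi18, if_neg h1.not_ge, if_pos h2]

theorem psi18_of_two_lt {t : ℝ} (h : 2 < t) : psi18 t = t ^ 2 + t - 7 := by
  rw [psi18, if_neg (by linarith), if_neg h.not_ge]

theorem convexOn_phi18 : ConvexOn ℝ (Ioi 0) phi18 :=
  ((Even.convexOn_pow even_two).add (convexOn_id convex_univ)).subset (subset_univ _)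
    (convex_Ioi 0)

theorem tangent_le_phi18 (x t : ℝ) : (2 * x + 1) * t - x ^ 2 ≤ phi18 t := by
  unfold phi18; nlinarith [sq_nonneg (t - x)]

theorem psi18_le_phi18 {t : ℝ} (ht : 0 < t) : psi18 t ≤ phi18 t := by
  unfold phi18
  rcases le_or_gt t 1 with h1 | h1
  · rw [psi18_of_le_one h1]; nlinarith [sq_nonneg (t - 1)]
  rcases le_or_gt t 2 with h2 | h2
  · rw [psi18_of_one_lt_of_le_two h1 h2]; nlinarith
  · rw [psi18_of_two_lt h2]; linarith

theorem phi18_sub_seven_le_psi18 {t : ℝ} (ht : 0 < t) : phi18 t - 7 ≤ psi18 t := by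
  unfold phi18
  rcases le_or_gt t 1 with h1 | h1
  · rw [psi18_of_le_one h1]; nlinarith
  rcases le_or_gt t 2 with h2 | h2
  · rw [psi18_of_one_lt_of_le_two h1 h2]; nlinarith
  · rw [psi18_of_two_lt h2]

theorem neg_one_le_psi18 {t : ℝ} (ht : 0 < t) : -1 ≤ psi18 t := by
  rcases le_or_gt t 1 with h1 | h1
  · rw [psi18_of_le_one h1]; linarith
  rcases le_or_gt t 2 with h2 | h2
  · rw [psi18_of_one_lt_of_le_two h1 h2]; linarith
  · rw [psi18_of_two_lt h2]; nlinarith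

theorem biconj_phi18 {x : ℝ} (hx : 0 < x) : biconj phi18 x = phi18 x :=
  biconj_eq_self_of_supportingLine hx (fun t _ ↦ tangent_le_phi18 x t) (by unfold phi18; ring)

theorem biconj_psi18_of_le_two {x : ℝ} (hx : 0 < x) (hx2 : x ≤ 2) : biconj psi18 x = -1 := by
  refine biconj_eq (a := 0) (b := -1) (fun t ht ↦ by simpa using neg_one_le_psi18 ht)
    (by ring) fun a b hab ↦ ?_
  have h0 : b ≤ -1 := le_of_affine_le_affine_on_Ioo one_pos fun t ht ↦ by
    have := hab t ht.1
    rwa [psi18_of_le_one ht.2.le, sub_eq_add_neg] at this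
  have h2 : a * 2 + b ≤ -1 := by
    have := hab 2 two_pos
    rw [psi18_of_one_lt_of_le_two one_lt_two le_rfl] at this
    linarith
  exact affine_le_of_le_of_le (by simpa using h0) (by linarith) hx.le hx2

theorem biconj_psi18_of_two_lt {x : ℝ} (hx : 2 < x) : biconj psi18 x = x ^ 2 + x - 7 := by
  rw [← psi18_of_two_lt hx]
  refine biconj_eq_self_of_supportingLine (a := 2 * x + 1) (b := -x ^ 2 - 7) (by linarith)
    (fun t ht ↦ ?_) (by rw [psi18_of_two_lt hx]; ring)
  linarith [tangent_le_phi18 x t, phi18_sub_seven_le_psi18 ht]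

theorem one_le_biconj_phi18_sub_biconj_psi18 {x : ℝ} (hx : 0 < x) :
    1 ≤ biconj phi18 x - biconj psi18 x := by
  rw [biconj_phi18 hx, phi18]
  rcases le_or_gt x 2 with h2 | h2
  · rw [biconj_psi18_of_le_two hx h2]; nlinarith
  · rw [biconj_psi18_of_two_lt h2]; linarith

theorem tendsto_biconj_phi18_sub_biconj_psi18 :
    Tendsto (fun x ↦ biconj phi18 x - biconj psi18 x) (𝓝[>] 0) (𝓝 1) := by
  have hpoly : Tendsto (fun x : ℝ ↦ x ^ 2 + x + 1) (𝓝[>] 0) (𝓝 1) := by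
    simpa using (show Continuous fun x : ℝ ↦ x ^ 2 + x + 1 by fun_prop).continuousWithinAt
      (s := Ioi 0) (x := 0) |>.tendsto
  refine hpoly.congr' (eventually_of_mem (Ioo_mem_nhdsGT two_pos) fun x hx ↦ ?_)
  dsimp only
  rw [biconj_phi18 hx.1, biconj_psi18_of_le_two hx.1 hx.2.le, phi18]; ring

theorem stmt_18 :
    ConvexOn ℝ (Set.Ioi (0:ℝ)) phi18 ∧
    (∀ x > 0, biconj phi18 x = phi18 x) ∧
    (∀ x, 0 < x → x ≤ 2 → biconj psi18 x = -1) ∧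
    (∀ x > 2, biconj psi18 x = x ^ 2 + x - 7) ∧
    (⨅ x : Set.Ioi (0:ℝ), ((phi18 x.1 - psi18 x.1 : ℝ) : EReal)) = (0 : EReal) ∧
    (⨅ x : Set.Ioi (0:ℝ),
        ((biconj phi18 x.1 - biconj psi18 x.1 : ℝ) : EReal)) = (1 : EReal) := by
  refine ⟨convexOn_phi18, fun x hx ↦ biconj_phi18 hx, fun x hx hx2 ↦ biconj_psi18_of_le_two hx hx2,
    fun x hx ↦ biconj_psi18_of_two_lt hx, ?_, ?_⟩
  · have h1 : phi18 1 - psi18 1 = 0 := by rw [psi18_of_le_one le_rfl, phi18]; norm_num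
    have := iInf_coe_eq_of_tendsto (s := Ioi (0:ℝ)) (f := fun x ↦ phi18 x - psi18 x)
      (l := pure 1) (by simp) (fun x hx ↦ sub_nonneg.2 (psi18_le_phi18 hx))
      (h1 ▸ tendsto_pure_nhds _ 1)
    exact_mod_cast this
  · exact_mod_cast iInf_coe_eq_of_tendsto (s := Ioi (0:ℝ)) (l := 𝓝[>] 0) self_mem_nhdsWithin
      (fun x hx ↦ one_le_biconj_phi18_sub_biconj_psi18 hx) tendsto_biconj_phi18_sub_biconj_psi18
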